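/- arXiv:1711.00225 — 5 statements merged into one kernel-verified Lean document; each statement's English description precedes it below -/
import Mathlib

section
/- No graph has multiset dimension 2; i.e., any m-resolving set W of a connected graph with |W| = 2 leads to a contradiction, since the two vertices of W have equal representation multisets. -/
open SimpleGraph

/-- The multiset of distances from `v` to the vertices of `W`. -/
noncomputable def mrep {V : Type*} (G : SimpleGraph V) (W : Finset V) (v : V) : Multiset ℕ :=
  W.val.map (fun w => G.dist v w)

/-- `W` is an m-resolving set of `G`: distinct vertices have distinct
representation multisets. -/
def IsMResolving {V : Type*} (G : SimpleGraph V) (W : Finset V) : Prop :=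
  ∀ u v : V, u ≠ v → mrep G W u ≠ mrep G W v

/-- The multiset dimension of `G`, equal to `⊤` if `G` has no m-resolving set. -/
noncomputable def mdim {V : Type*} (G : SimpleGraph V) : ℕ∞ :=
  ⨅ W : {W : Finset V // IsMResolving G W}, (W.1.card : ℕ∞)

/-
Both vertices of a pair `{a, b}` see the distances `{0, d(a, b)}`, so no pair is m-resolving;
and the multiset dimension, an infimum in the well-ordered `ℕ∞`, is attained when finite.
-/

section MultisetDimension

variable {V : Type*} (G : SimpleGraph V)

theorem mrep_pair_left_eq_right [DecidableEq V] (a b : V) :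
    mrep G {a, b} a = mrep G {a, b} b := by
  by_cases hab : a = b
  · rw [hab]
  have hval : ({a, b} : Finset V).val = a ::ₘ {b} := by
    rw [Finset.insert_val, Finset.singleton_val,
      Multiset.ndinsert_of_notMem (Multiset.mem_singleton.not.mpr hab)]
  simp only [mrep, hval, Multiset.map_cons, Multiset.map_singleton, G.dist_self]
  rw [G.dist_comm]
  exact Multiset.cons_swap _ _ _

theorem not_isMResolving_of_card_eq_two {W : Finset V} (hW : W.card = 2) :
    ¬ IsMResolving G W := by
  classical
  obtain ⟨a, b, hab, rfl⟩ := Finset.card_eq_two.mp hW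
  exact fun hres => hres a b hab (mrep_pair_left_eq_right G a b)

theorem exists_isMResolving_card_eq_of_mdim_eq {n : ℕ} (h : mdim G = n) :
    ∃ W : Finset V, IsMResolving G W ∧ W.card = n := by
  have : Nonempty {W : Finset V // IsMResolving G W} := by
    by_contra hempty
    rw [not_nonempty_iff] at hempty
    exact ENat.natCast_ne_top n (h ▸ ENat.iInf_eq_top_of_isEmpty)
  obtain ⟨⟨W, hres⟩, hW⟩ := ENat.exists_eq_iInf fun W : {W : Finset V // IsMResolving G W} =>
    (W.1.card : ℕ∞)
  exact ⟨W, hres, by exact_mod_cast hW.trans h⟩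

theorem mdim_ne_two : mdim G ≠ 2 := fun h => by
  obtain ⟨W, hres, hW⟩ := exists_isMResolving_card_eq_of_mdim_eq G h
  exact not_isMResolving_of_card_eq_two G hW hres

end MultisetDimension

theorem stmt_3_general {V : Type*} (G : SimpleGraph V) :
    (∀ W : Finset V, W.card = 2 → ¬ IsMResolving G W) ∧ mdim G ≠ 2 :=
  ⟨fun _ hW => not_isMResolving_of_card_eq_two G hW, mdim_ne_two G⟩

theorem stmt_3 {V : Type*} (G : SimpleGraph V) (hG : G.Connected) :
    (∀ W : Finset V, W.card = 2 → ¬ IsMResolving G W) ∧ mdim G ≠ 2 :=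
  stmt_3_general G
end

section
/- If G is a connected graph of order n ≥ 3 and diameter d, and W is an m-resolving set of G with |W| = k, then C(k+d−1, d−1) + k ≥ n. Hence md(G) ≥ f(n,d), where f(n,d) is the least k with C(k+d−1,d−1)+k ≥ n. -/
open SimpleGraph

/-! A vertex outside `W` is at distance between `1` and `d` from every vertex of `W`, so its
representation is a `|W|`-multiset on `{1, …, d}`; there are `C(|W| + d - 1, |W|)` of these, and
an m-resolving set makes the representations of the `n - |W|` vertices outside `W` distinct. -/

section

open Finset

theorem Finset.card_le_choose_of_forall_mem {α : Type*} [DecidableEq α] {A : Finset α}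
    {S : Finset (Multiset α)} {k : ℕ} (hcard : ∀ m ∈ S, Multiset.card m = k)
    (hmem : ∀ m ∈ S, ∀ x ∈ m, x ∈ A) : #S ≤ (#A + k - 1).choose k := by
  have hsub : S ⊆ (univ : Finset (Sym A k)).image
      fun s : Sym A k => (s : Multiset A).map Subtype.val := by
    intro m hm
    lift m to Multiset A using hmem m hm
    refine mem_image.mpr ⟨⟨m, ?_⟩, mem_univ _, rfl⟩
    simpa using hcard _ hm
  calc #S ≤ Fintype.card (Sym A k) := (card_le_card hsub).trans card_image_le
    _ = (#A + k - 1).choose k := by rw [Sym.card_sym_eq_choose, Fintype.card_coe]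

-- An equality by symmetry when `0 < d`; at `d = 0` truncated subtraction makes the right side `1`.
theorem Nat.choose_add_sub_one_le (d k : ℕ) :
    (d + k - 1).choose k ≤ (k + d - 1).choose (d - 1) := by
  rcases d with _ | d
  · cases k <;> simp
  · rw [show d + 1 + k - 1 = k + d by omega, show k + (d + 1) - 1 = k + d by omega,
      Nat.add_sub_cancel, Nat.choose_symm_add]

variable {V : Type*} {G : SimpleGraph V} {W : Finset V}

theorem card_mrep (v : V) : Multiset.card (mrep G W v) = #W := by
  simp [mrep]

theorem mem_Icc_of_mem_mrep [Finite V] (hG : G.Connected) {v : V} (hv : v ∉ W) {x : ℕ}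
    (hx : x ∈ mrep G W v) : x ∈ Icc 1 G.diam := by
  obtain ⟨w, hw, rfl⟩ := Multiset.mem_map.mp hx
  have : Nonempty V := hG.nonempty
  exact mem_Icc.mpr ⟨hG.pos_dist_of_ne (ne_of_mem_of_not_mem hw hv).symm,
    G.dist_le_diam (G.connected_iff_ediam_ne_top.mp hG)⟩

theorem IsMResolving.card_le [Fintype V] (hG : G.Connected) (hW : IsMResolving G W) :
    Fintype.card V ≤ (#W + G.diam - 1).choose (G.diam - 1) + #W := by
  classical
  have hinj : Set.InjOn (mrep G W) ↑Wᶜ := fun u _ v _ huv => by_contra fun hne => hW u v hne huv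
  have hcompl : #Wᶜ ≤ (G.diam + #W - 1).choose #W := by
    have hA : #(Icc 1 G.diam) = G.diam := by simp
    rw [← card_image_of_injOn hinj, ← hA]
    refine card_le_choose_of_forall_mem ?_ ?_ <;>
      simp only [mem_image, mem_compl, forall_exists_index, and_imp]
    · rintro _ v _ rfl
      exact card_mrep v
    · rintro _ v hv rfl x hx
      exact mem_Icc_of_mem_mrep hG hv hx
  rw [← card_compl_add_card W]
  exact Nat.add_le_add_right (hcompl.trans (Nat.choose_add_sub_one_le _ _)) _

end

theorem stmt_5_general {V : Type*} [Fintype V] (G : SimpleGraph V) (hG : G.Connected) :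
    (∀ W : Finset V, IsMResolving G W →
        Fintype.card V ≤ (W.card + G.diam - 1).choose (G.diam - 1) + W.card) ∧
      ((sInf {k : ℕ | Fintype.card V ≤ (k + G.diam - 1).choose (G.diam - 1) + k} : ℕ) : ℕ∞)
        ≤ mdim G :=
  ⟨fun _ hW => hW.card_le hG,
    le_iInf fun W => Nat.cast_le.mpr (Nat.sInf_le (W.2.card_le hG))⟩

theorem stmt_5 {V : Type*} [Fintype V] (G : SimpleGraph V) (hG : G.Connected)
    (hn : 3 ≤ Fintype.card V) :
    (∀ W : Finset V, IsMResolving G W →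
        Fintype.card V ≤ (W.card + G.diam - 1).choose (G.diam - 1) + W.card) ∧
      ((sInf {k : ℕ | Fintype.card V ≤ (k + G.diam - 1).choose (G.diam - 1) + k} : ℕ) : ℕ∞)
        ≤ mdim G :=
  stmt_5_general G hG
end

section
/- If G is a connected graph of diameter at most 2 that is not a path, then md(G) = ∞, i.e., G has no m-resolving set. -/
open SimpleGraph

/-!
When all distances are at most 2, the representation of a vertex `u ∈ W` consists of a single
`0` and is determined by the number of neighbours of `u` in `W`, which is less than `#W`. If `W`
is m-resolving, these numbers are therefore exactly `0, …, #W - 1`; for `2 ≤ #W` some vertex of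
`W` is then adjacent to all the others and another one to none of them, which is absurd.
If `#W ≤ 1`, the distance to a single vertex separates all vertices, and a connected graph with
this property is a path.
-/

namespace Multiset

lemma card_eq_count_zero_add_count_one_add_count_two {m : Multiset ℕ}
    (hm : ∀ x ∈ m, x ≤ 2) : card m = m.count 0 + m.count 1 + m.count 2 := by
  rw [← sum_count_eq_card (s := Finset.range 3) fun x hx => Finset.mem_range.2 (by grind)]
  simp [Finset.sum_range_succ]

lemma eq_of_le_two_of_card_eq_of_count_eq {m₁ m₂ : Multiset ℕ}
    (h₁ : ∀ x ∈ m₁, x ≤ 2) (h₂ : ∀ x ∈ m₂, x ≤ 2) (hcard : card m₁ = card m₂)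
    (h0 : m₁.count 0 = m₂.count 0) (h1 : m₁.count 1 = m₂.count 1) : m₁ = m₂ := by
  have e₁ := card_eq_count_zero_add_count_one_add_count_two h₁
  have e₂ := card_eq_count_zero_add_count_one_add_count_two h₂
  ext n
  match n with
  | 0 => exact h0
  | 1 => exact h1
  | 2 => omega
  | n + 3 =>
    rw [count_eq_zero.2 fun h => by grind, count_eq_zero.2 fun h => by grind]

end Multiset

namespace SimpleGraph

variable {V : Type*} {G : SimpleGraph V}

lemma Reachable.exists_adj_dist_add_one {v w : V} (hr : G.Reachable v w) (hne : v ≠ w) :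
    ∃ x, G.Adj v x ∧ G.dist x w + 1 = G.dist v w := by
  obtain ⟨p, hp⟩ := hr.exists_walk_length_eq_dist
  cases p with
  | nil => exact absurd rfl hne
  | cons hadj q =>
    refine ⟨_, hadj, le_antisymm ?_ ?_⟩
    · rw [← hp, Walk.length_cons]
      exact Nat.add_le_add_right (dist_le q) 1
    · have := hadj.reachable.dist_triangle_left w
      rw [dist_eq_one_iff_adj.2 hadj] at this
      omega

theorem Connected.nonempty_iso_pathGraph_of_injective_dist [Fintype V] (hG : G.Connected)
    {w : V} (hinj : Function.Injective (G.dist · w)) :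
    Nonempty (G ≃g pathGraph (Fintype.card V)) := by
  have hlt (v : V) : G.dist v w < Fintype.card V := by
    obtain ⟨p, hp, hlen⟩ := hG.exists_path_of_dist v w
    exact hlen ▸ hp.length_lt
  let f (v : V) : Fin (Fintype.card V) := ⟨G.dist v w, hlt v⟩
  have hf : Function.Bijective f := (Fintype.bijective_iff_injective_and_card f).2
    ⟨fun u v h => hinj (Fin.val_eq_of_eq h), (Fintype.card_fin _).symm⟩
  have adj_of_succ (u v : V) (h : G.dist u w + 1 = G.dist v w) : G.Adj u v := by
    obtain ⟨x, hvx, hx⟩ := (hG v w).exists_adj_dist_add_one (by rintro rfl; simp at h)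
    rw [hinj (Nat.add_right_cancel (hx.trans h.symm))] at hvx
    exact hvx.symm
  refine ⟨⟨Equiv.ofBijective f hf, fun {u v} => ?_⟩⟩
  simp only [Equiv.ofBijective_apply, pathGraph_adj, f]
  refine ⟨?_, fun h => ?_⟩
  · rintro (h | h)
    · exact adj_of_succ u v h
    · exact (adj_of_succ v u h).symm
  · have hne : G.dist u w ≠ G.dist v w := hinj.ne h.ne
    have := h.diff_dist_adj (u := w)
    rw [dist_comm (u := w), dist_comm (u := w)] at this
    omega

lemma exists_injective_dist_of_isMResolving [Nonempty V] {W : Finset V}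
    (hW : IsMResolving G W) (hcard : W.card ≤ 1) : ∃ w, Function.Injective (G.dist · w) := by
  obtain ⟨w, hw⟩ := Finset.card_le_one_iff_subset_singleton.1 hcard
  refine ⟨w, fun u v h => by_contra fun hne => hW u v hne ?_⟩
  rcases Finset.subset_singleton_iff.1 hw with rfl | rfl
  · simp [mrep]
  · simpa [mrep] using h

lemma card_mrep (W : Finset V) (v : V) : Multiset.card (mrep G W v) = W.card := by
  simp [mrep]

lemma count_zero_mrep (hG : G.Connected) {W : Finset V} {u : V} (hu : u ∈ W) :
    (mrep G W u).count 0 = 1 := by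
  classical
  rw [mrep, Multiset.count_map, ← Multiset.count_eq_one_of_mem W.nodup hu,
    Multiset.count_eq_card_filter_eq]
  congr 1
  exact Multiset.filter_congr fun w _ => by rw [eq_comm, hG.dist_eq_zero_iff, eq_comm]

theorem not_isMResolving_of_dist_le_two (hG : G.Connected) (hd : ∀ u v, G.dist u v ≤ 2)
    {W : Finset V} (hW : 2 ≤ W.card) : ¬ IsMResolving G W := by
  intro hres
  have hle (v : V) : ∀ x ∈ mrep G W v, x ≤ 2 := by
    simp only [mrep, Multiset.mem_map]
    rintro _ ⟨w, -, rfl⟩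
    exact hd v w
  have hcard (u : V) (hu : u ∈ W) :
      (mrep G W u).count 1 + (mrep G W u).count 2 + 1 = W.card := by
    have := Multiset.card_eq_count_zero_add_count_one_add_count_two (hle u)
    rw [card_mrep, count_zero_mrep hG hu] at this
    omega
  let c (u : V) : ℕ := (mrep G W u).count 1
  have hinj : Set.InjOn c W := fun u hu v hv h => by_contra fun hne =>
    hres u v hne <| Multiset.eq_of_le_two_of_card_eq_of_count_eq (hle u) (hle v)
      (by rw [card_mrep, card_mrep]) (by rw [count_zero_mrep hG hu, count_zero_mrep hG hv]) h
  have himage : W.image c = Finset.range W.card := by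
    refine Finset.eq_of_subset_of_card_le ?_
      (by rw [Finset.card_image_of_injOn hinj, Finset.card_range])
    intro n hn
    obtain ⟨u, hu, rfl⟩ := Finset.mem_image.1 hn
    have := hcard u hu
    simp only [c]
    exact Finset.mem_range.2 (by omega)
  obtain ⟨a, ha, ha0⟩ : ∃ a ∈ W, (mrep G W a).count 1 = 0 :=
    Finset.mem_image.1 (himage ▸ Finset.mem_range.2 (by omega))
  obtain ⟨b, hb, hbk⟩ : ∃ b ∈ W, (mrep G W b).count 1 = W.card - 1 :=
    Finset.mem_image.1 (himage ▸ Finset.mem_range.2 (by omega))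
  have hab : a ≠ b := by rintro rfl; omega
  have hba : G.dist b a ≠ 2 := fun h => by
    have := hcard b hb
    have : 0 < (mrep G W b).count 2 := Multiset.count_pos.2 (Multiset.mem_map.2 ⟨a, ha, h⟩)
    omega
  have : 0 < (mrep G W a).count 1 := Multiset.count_pos.2 <| Multiset.mem_map.2 ⟨b, hb, by
    have := hd b a
    have := hG.pos_dist_of_ne hab.symm
    rw [dist_comm]
    omega⟩
  omega

end SimpleGraph

lemma mdim_eq_top_iff {V : Type*} {G : SimpleGraph V} :
    mdim G = ⊤ ↔ ∀ W, ¬ IsMResolving G W := by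
  simp [mdim, iInf_eq_top]

theorem stmt_7 {V : Type*} [Fintype V] (G : SimpleGraph V) (hG : G.Connected)
    (hdiam : G.diam ≤ 2) (hP : ¬ ∃ n : ℕ, Nonempty (G ≃g pathGraph n)) :
    mdim G = ⊤ := by
  have : Nonempty V := hG.nonempty
  have hd (u v : V) : G.dist u v ≤ 2 :=
    (dist_le_diam (G.connected_iff_ediam_ne_top.1 hG)).trans hdiam
  refine mdim_eq_top_iff.2 fun W hW => ?_
  rcases le_or_gt W.card 1 with hW1 | hW2
  · obtain ⟨w, hw⟩ := exists_injective_dist_of_isMResolving hW hW1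
    exact hP ⟨_, hG.nonempty_iso_pathGraph_of_injective_dist hw⟩
  · exact not_isMResolving_of_dist_le_two hG hd hW2 hW
end

section
/- The complete graph K_n for n ≥ 3 has no m-resolving set: for any W ⊆ V(K_n), vertices outside W have representation {1^{|W|}} and vertices in W have representation {0, 1^{|W|−1}}, so in all cases some two distinct vertices share the same representation multiset. -/
open SimpleGraph

lemma kdist {V : Type*} {u w : V} (h : u ≠ w) : (completeGraph V).dist u w = 1 := by
  exact SimpleGraph.dist_eq_one_iff_adj.mpr h

lemma mrep_notmem {V : Type*} {W : Finset V} {u : V} (hu : u ∉ W) :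
    mrep (completeGraph V) W u = Multiset.replicate W.card 1 := by
  unfold mrep
  rw [show Multiset.replicate W.card 1 = W.val.map (fun _ => 1) by
    simp [Multiset.map_const']]
  exact Multiset.map_congr rfl (fun w hw => kdist (fun h => hu (h ▸ hw)))

lemma mrep_mem {V : Type*} {W : Finset V} {u : V} (hu : u ∈ W) :
    mrep (completeGraph V) W u = 0 ::ₘ Multiset.replicate (W.card - 1) 1 := by
  classical
  unfold mrep
  have hv : W.val = u ::ₘ (W.erase u).val := by
    rw [Finset.erase_val]
    exact (Multiset.cons_erase hu).symm
  rw [hv, Multiset.map_cons, SimpleGraph.dist_self]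
  congr 1
  rw [show Multiset.replicate (W.card - 1) 1 = (W.erase u).val.map (fun _ => 1) by
    rw [Multiset.map_const']
    congr 1
    show W.card - 1 = (W.erase u).card
    rw [Finset.card_erase_of_mem hu]]
  exact Multiset.map_congr rfl (fun w hw => kdist (fun h => (Finset.ne_of_mem_erase hw) h.symm))

theorem stmt_8 {V : Type*} [Fintype V] (hn : 3 ≤ Fintype.card V) :
    (∀ W : Finset V, ¬ IsMResolving (completeGraph V) W) ∧
      mdim (completeGraph V) = ⊤ := by
  classical
  have main : ∀ W : Finset V, ¬ IsMResolving (completeGraph V) W := by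
    intro W hres
    by_cases h : 2 ≤ Wᶜ.card
    · obtain ⟨u, hu, v, hv, huv⟩ := Finset.one_lt_card.mp h
      exact hres u v huv (by rw [mrep_notmem (Finset.mem_compl.mp hu),
        mrep_notmem (Finset.mem_compl.mp hv)])
    · have : 2 ≤ W.card := by
        have := Finset.card_compl_add_card W
        omega
      obtain ⟨u, hu, v, hv, huv⟩ := Finset.one_lt_card.mp this
      exact hres u v huv (by rw [mrep_mem hu, mrep_mem hv])
  refine ⟨main, ?_⟩
  have : IsEmpty {W : Finset V // IsMResolving (completeGraph V) W} :=
    ⟨fun ⟨W, hW⟩ => main W hW⟩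
  show ⨅ W : {W : Finset V // IsMResolving (completeGraph V) W}, (W.1.card : ℕ∞) = ⊤
  exact iInf_of_empty _
end

section
/- For n ≥ 6, the cycle C_n has multiset dimension 3; in particular, with vertices labelled v_0,...,v_{n−1} cyclically, the set W = {v_0, v_1, v_3} is an m-resolving set of C_n. -/
open SimpleGraph

/-! The distance in `C_n` is `min (|i - j|, n - |i - j|)`, since each step of a walk moves the
index by `±1` modulo `n`. For `W = {v_0, v_1, v_3}`, equality of two representation multisets
means the two distance triples agree up to one of six permutations, and each of these cases is
refuted by linear arithmetic. Conversely, a set `{a, b}` of at most two vertices is preserved by the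
reflection `x ↦ a + b - x`, an isometry of `C_n` that moves some vertex when `n ≥ 3`, so it cannot
be m-resolving. -/

open scoped Fin.CommRing

namespace SimpleGraph

variable {V : Type*} {G : SimpleGraph V}

theorem mrep_insert [DecidableEq V] {W : Finset V} {a : V} (ha : a ∉ W) (v : V) :
    mrep G (insert a W) v = G.dist v a ::ₘ mrep G W v := by
  rw [mrep, Finset.insert_val_of_notMem ha, Multiset.map_cons, mrep]

theorem mrep_singleton (a v : V) : mrep G {a} v = {G.dist v a} := rfl

theorem mrep_apply_eq_of_map_eq (f : V ≃ V) (hf : ∀ u v, G.dist (f u) (f v) = G.dist u v)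
    {W : Finset V} (hW : W.map f.toEmbedding = W) (v : V) : mrep G W (f v) = mrep G W v := by
  conv_lhs => rw [mrep, ← hW]
  rw [Finset.map_val, Multiset.map_map, mrep]
  exact Multiset.map_congr rfl fun w _ => hf v w

theorem not_isMResolving_of_map_eq (f : V ≃ V) (hf : ∀ u v, G.dist (f u) (f v) = G.dist u v)
    {W : Finset V} (hW : W.map f.toEmbedding = W) {v : V} (hv : f v ≠ v) : ¬ IsMResolving G W :=
  fun hres => hres _ _ hv (mrep_apply_eq_of_map_eq f hf hW v)

theorem mdim_eq_card {W : Finset V} (hW : IsMResolving G W)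
    (hmin : ∀ W' : Finset V, IsMResolving G W' → W.card ≤ W'.card) : mdim G = W.card :=
  le_antisymm (iInf_le_of_le ⟨W, hW⟩ le_rfl) (le_iInf fun W' => by exact_mod_cast hmin W'.1 W'.2)

end SimpleGraph

theorem Multiset.eq_perm_of_triple_eq {α : Type*} {a b c a' b' c' : α}
    (h : ({a, b, c} : Multiset α) = {a', b', c'}) :
    (a' = a ∧ b' = b ∧ c' = c) ∨ (a' = b ∧ b' = a ∧ c' = c) ∨ (a' = c ∧ b' = b ∧ c' = a) ∨
      (a' = b ∧ b' = c ∧ c' = a) ∨ (a' = c ∧ b' = a ∧ c' = b) ∨ (a' = a ∧ b' = c ∧ c' = b) := by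
  have h' : [a', b', c'] ∈ List.permutations [a, b, c] :=
    List.mem_permutations.2 (Multiset.coe_eq_coe.1 h).symm
  simpa [List.permutations, List.permutationsAux, List.permutationsAux.rec] using h'

theorem Finset.exists_map_subLeft_eq_of_card_le_two {α : Type*} [AddCommGroup α] [DecidableEq α]
    (W : Finset α) (hW : W.card ≤ 2) :
    ∃ c, W.map (Equiv.subLeft c).toEmbedding = W := by
  interval_cases hcard : W.card
  · exact ⟨0, by simp [Finset.card_eq_zero.1 hcard]⟩
  · obtain ⟨a, rfl⟩ := Finset.card_eq_one.1 hcard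
    exact ⟨a + a, by simp⟩
  · obtain ⟨a, b, -, rfl⟩ := Finset.card_eq_two.1 hcard
    exact ⟨a + b, by simp [Finset.pair_comm]⟩

theorem Fin.val_sub_cases {n : ℕ} (a b : Fin n) :
    b ≤ a ∧ (a - b).val = a.val - b.val ∨ a < b ∧ (a - b).val = n + a.val - b.val := by
  rcases le_or_gt b a with h | h
  · exact Or.inl ⟨h, Fin.coe_sub_iff_le.2 h⟩
  · exact Or.inr ⟨h, Fin.coe_sub_iff_lt.2 h⟩

def cycleDist (n a b : ℕ) : ℕ := min (Nat.dist a b) (n - Nat.dist a b)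

theorem cycleDist_of_le {n a b : ℕ} (h : b ≤ a) : cycleDist n a b = min (a - b) (n + b - a) := by
  simp only [cycleDist, Nat.dist]
  omega

theorem cycleDist_injective_zero_one_three {n x y : ℕ} (hn : 6 ≤ n) (hx : x < n) (hy : y < n)
    (h : ({cycleDist n x 0, cycleDist n x 1, cycleDist n x 3} : Multiset ℕ) =
      {cycleDist n y 0, cycleDist n y 1, cycleDist n y 3}) : x = y := by
  wlog hxy : x ≤ y generalizing x y
  · exact (this hy hx h.symm (by omega)).symm
  have hperm := Multiset.eq_perm_of_triple_eq h
  -- for `3 ≤ x ≤ y` no `Nat.dist` needs a case split, which leaves `omega` only the `min`s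
  rcases lt_or_ge x 3 with hx3 | hx3
  · interval_cases x <;> simp only [cycleDist, Nat.dist] at hperm <;> omega
  · simp only [cycleDist_of_le (by omega : 0 ≤ x), cycleDist_of_le (by omega : 1 ≤ x),
      cycleDist_of_le hx3, cycleDist_of_le (by omega : 0 ≤ y), cycleDist_of_le (by omega : 1 ≤ y),
      cycleDist_of_le (by omega : 3 ≤ y)] at hperm
    omega

section cycle

variable {n : ℕ} [NeZero n]

theorem cycleGraph_adj_add_one (hn : 2 ≤ n) (u : Fin n) : (cycleGraph n).Adj u (u + 1) := by
  rw [cycleGraph_adj', add_sub_cancel_left, Fin.val_one', Nat.mod_eq_of_lt hn]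
  exact Or.inr rfl

theorem cycleGraph_connected_of_neZero : (cycleGraph n).Connected :=
  .mk cycleGraph_preconnected

theorem cycleGraph_dist_add_natCast_le (hn : 2 ≤ n) (u : Fin n) (k : ℕ) :
    (cycleGraph n).dist u (u + k) ≤ k := by
  induction k with
  | zero => simp
  | succ k ih =>
    calc (cycleGraph n).dist u (u + (k + 1 : ℕ))
        ≤ (cycleGraph n).dist u (u + k) + (cycleGraph n).dist (u + k) (u + k + 1) := by
          rw [Nat.cast_succ, ← add_assoc]
          exact cycleGraph_connected_of_neZero.dist_triangle
      _ ≤ k + 1 := by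
          rw [dist_eq_one_iff_adj.2 (cycleGraph_adj_add_one hn _)]
          omega

theorem cycleGraph_dist_le_val_sub (hn : 2 ≤ n) (u v : Fin n) :
    (cycleGraph n).dist u v ≤ (v - u).val := by
  simpa using cycleGraph_dist_add_natCast_le hn u (v - u).val

end cycle

theorem cycleGraph_adj_val {n : ℕ} {u w : Fin n} (h : (cycleGraph n).Adj u w) :
    w.val = u.val + 1 ∨ u.val = w.val + 1 ∨ (u.val = 0 ∧ w.val + 1 = n) ∨
      (w.val = 0 ∧ u.val + 1 = n) := by
  rw [cycleGraph_adj'] at h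
  have := Fin.val_sub_cases u w
  have := Fin.val_sub_cases w u
  have := u.isLt
  have := w.isLt
  simp only [Fin.lt_def, Fin.le_def] at *
  omega

theorem cycleDist_le_length {n : ℕ} {u v : Fin n} (p : (cycleGraph n).Walk u v) :
    cycleDist n u v ≤ p.length := by
  induction p with
  | nil => simp [cycleDist]
  | @cons u w v h q ih =>
    have := cycleGraph_adj_val h
    have := v.isLt
    rw [Walk.length_cons]
    simp only [cycleDist, Nat.dist] at ih ⊢
    omega

theorem cycleGraph_dist {n : ℕ} (hn : 2 ≤ n) (u v : Fin n) :
    (cycleGraph n).dist u v = cycleDist n u v := by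
  have : NeZero n := ⟨by omega⟩
  apply le_antisymm
  · have h₁ := cycleGraph_dist_le_val_sub hn u v
    have h₂ := dist_comm.trans_le (cycleGraph_dist_le_val_sub hn v u)
    have := Fin.val_sub_cases u v
    have := Fin.val_sub_cases v u
    simp only [Fin.lt_def, Fin.le_def, cycleDist, Nat.dist] at *
    omega
  · obtain ⟨p, hp⟩ := cycleGraph_connected_of_neZero.exists_walk_length_eq_dist u v
    exact hp ▸ cycleDist_le_length p

theorem cycleGraph_dist_eq_min_val_sub {n : ℕ} (hn : 2 ≤ n) (u v : Fin n) :
    (cycleGraph n).dist u v = min (v - u).val (u - v).val := by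
  rw [cycleGraph_dist hn]
  have := Fin.val_sub_cases u v
  have := Fin.val_sub_cases v u
  simp only [Fin.lt_def, Fin.le_def, cycleDist, Nat.dist] at *
  omega

theorem isMResolving_cycleGraph_of_val_eq {n : ℕ} (hn : 6 ≤ n) {a b c : Fin n} (ha : a.val = 0)
    (hb : b.val = 1) (hc : c.val = 3) : IsMResolving (cycleGraph n) {a, b, c} := by
  intro u v huv h
  simp (disch := simp [Fin.ext_iff, ha, hb, hc]) only [mrep_insert, mrep_singleton,
    cycleGraph_dist (by omega : 2 ≤ n), ha, hb, hc] at h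
  exact huv (Fin.ext (cycleDist_injective_zero_one_three hn u.isLt v.isLt h))

section reflection

variable {n : ℕ} [NeZero n]

theorem cycleGraph_dist_sub_sub (hn : 2 ≤ n) (c u v : Fin n) :
    (cycleGraph n).dist (c - u) (c - v) = (cycleGraph n).dist u v := by
  rw [cycleGraph_dist_eq_min_val_sub hn, cycleGraph_dist_eq_min_val_sub hn,
    sub_sub_sub_cancel_left, sub_sub_sub_cancel_left, min_comm]

theorem not_isMResolving_cycleGraph_of_card_le_two (hn : 3 ≤ n) {W : Finset (Fin n)}
    (hW : W.card ≤ 2) : ¬ IsMResolving (cycleGraph n) W := by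
  obtain ⟨c, hc⟩ := W.exists_map_subLeft_eq_of_card_le_two hW
  have hf := cycleGraph_dist_sub_sub (by omega) c
  by_cases h0 : c = 0
  · subst h0
    have : Fact (2 < n) := ⟨by omega⟩
    exact not_isMResolving_of_map_eq _ hf hc (v := 1)
      (by simpa using CharP.neg_one_ne_one (Fin n) n)
  · exact not_isMResolving_of_map_eq _ hf hc (v := 0) (by simpa using h0)

end reflection

theorem stmt_16 (n : ℕ) (hn : 6 ≤ n) :
    IsMResolving (cycleGraph n)
        {(⟨0, by omega⟩ : Fin n), ⟨1, by omega⟩, ⟨3, by omega⟩} ∧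
      mdim (cycleGraph n) = 3 := by
  have : NeZero n := ⟨by omega⟩
  have hW := isMResolving_cycleGraph_of_val_eq hn (a := ⟨0, by omega⟩) (b := ⟨1, by omega⟩)
    (c := ⟨3, by omega⟩) rfl rfl rfl
  refine ⟨hW, (mdim_eq_card hW fun W hW' => ?_).trans rfl⟩
  by_contra! h
  exact not_isMResolving_cycleGraph_of_card_le_two (by omega) (Nat.le_of_lt_succ h) hW'
end
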